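/- Let E be a finite-dimensional real normed vector space, U ⊆ E open, J an almost complex structure on U, and Γ the Christoffel symbols of a minimal connection for J (almost complex with torsion equal to (1/4)N_J pointwise). Let A : U → (E →L[ℝ] E →L[ℝ] E) be smooth with each A(x) symmetric (A(x)(u)(v) = A(x)(v)(u)) and complex-bilinear with respect to J(x) (A(x)(u)(J(x)v) = J(x)(A(x)(u)(v))). Then Γ + A is again a minimal connection for J, and the curvatures satisfy, for all x ∈ U and u, v, w ∈ E: (R_{Γ+A})^{--}(x)(u,v)(w) = (R_Γ)^{--}(x)(u,v)(w) + (1/4)·A(x)(N_J(u,v)(x))(w), where the (--)-component is taken in the arguments (u,v) with respect to J(x). Consequently the operator □_{u∧v}w := ∇_{N_J(u,v)}w - 4R^{--}(u,v)w is independent of the choice of minimal connection. -/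

import Mathlib

/-!
Write `Γ' = Γ + A`. Then `R_{Γ'}(u,v)w - R_Γ(u,v)w` equals
`(∇_u A)(v,w) - (∇_v A)(u,w) + A(T(u,v), w) + [A_u, A_v] w`, with `T = N_J/4` the torsion of `Γ`.
Because `Γ` is almost complex, differentiating `A(p, Jq) = J A(p,q)` shows that `∇_z A` is again
symmetric and complex bilinear; hence the `∇A`-terms and the commutator are complex linear in one
of `u, v` and have no `(--)`-component. The Nijenhuis tensor is totally antilinear, so
`A(N_J(u,v), w)` is its own `(--)`-component.
-/

/-- The Lie bracket of two vector fields on a normed space. -/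
noncomputable def lieB {G : Type*} [NormedAddCommGroup G] [NormedSpace ℝ G]
    (X Y : G → G) : G → G :=
  fun p => fderiv ℝ Y p (X p) - fderiv ℝ X p (Y p)

/-- The Nijenhuis tensor `N_J(X,Y) = [JX,JY] - J[JX,Y] - J[X,JY] - [X,Y]`. -/
noncomputable def nijenhuis {G : Type*} [NormedAddCommGroup G] [NormedSpace ℝ G]
    (J : G → G →L[ℝ] G) (X Y : G → G) : G → G :=
  fun p =>
    lieB (fun q => J q (X q)) (fun q => J q (Y q)) p
      - J p (lieB (fun q => J q (X q)) Y p)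
      - J p (lieB X (fun q => J q (Y q)) p)
      - lieB X Y p

/-- The curvature of a connection with Christoffel symbols `Γ`:
`R(x)(u,v)(w) = (D_uΓ)(x)(v)(w) - (D_vΓ)(x)(u)(w) + Γ(x)(u)(Γ(x)(v)(w)) - Γ(x)(v)(Γ(x)(u)(w))`. -/
noncomputable def curvature {E : Type*} [NormedAddCommGroup E] [NormedSpace ℝ E]
    (Γ : E → E →L[ℝ] E →L[ℝ] E) : E → E → E → E → E :=
  fun x u v w =>
    fderiv ℝ Γ x u v w - fderiv ℝ Γ x v u w + Γ x u (Γ x v w) - Γ x v (Γ x u w)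

/-- The totally `J`-antilinear part `R^{--}` of the curvature in its first two
arguments `(u,v)`. -/
noncomputable def curvMM {E : Type*} [NormedAddCommGroup E] [NormedSpace ℝ E]
    (J : E → E →L[ℝ] E) (Γ : E → E →L[ℝ] E →L[ℝ] E) : E → E → E → E → E :=
  fun x u v w =>
    (1/4 : ℝ) • (curvature Γ x u v w + J x (curvature Γ x (J x u) v w)
      + J x (curvature Γ x u (J x v) w) - curvature Γ x (J x u) (J x v) w)

open ContinuousLinearMap Filter Topology

section Calculus

variable {E F G : Type*} [NormedAddCommGroup E] [NormedSpace ℝ E]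
  [NormedAddCommGroup F] [NormedSpace ℝ F] [NormedAddCommGroup G] [NormedSpace ℝ G]

lemma fderiv_clm_apply_const {f : E → F →L[ℝ] G} {x : E} (hf : DifferentiableAt ℝ f x)
    (p : F) (z : E) : fderiv ℝ (fun y => f y p) x z = fderiv ℝ f x z p := by
  rw [fderiv_clm_apply hf (differentiableAt_const p)]
  simp

lemma fderiv_clm_apply_apply_const {H : Type*} [NormedAddCommGroup H] [NormedSpace ℝ H]
    {A : E → F →L[ℝ] G →L[ℝ] H} {x : E} (hA : DifferentiableAt ℝ A x) (p : F) (q : G) (z : E) :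
    fderiv ℝ (fun y => A y p q) x z = fderiv ℝ A x z p q := by
  rw [fderiv_clm_apply_const (hA.clm_apply (differentiableAt_const p)),
    fderiv_clm_apply_const hA]

lemma fderiv_apply_symm_of_eventually {A : E → F →L[ℝ] F →L[ℝ] G} {x : E}
    (hA : DifferentiableAt ℝ A x) (hsymm : ∀ᶠ y in 𝓝 x, ∀ p q, A y p q = A y q p)
    (z : E) (p q : F) : fderiv ℝ A x z p q = fderiv ℝ A x z q p := by
  have hev : (fun y => A y p q) =ᶠ[𝓝 x] fun y => A y q p := hsymm.mono fun y hy => hy p q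
  have h := congrArg (fun L : E →L[ℝ] G => L z) hev.fderiv_eq
  simpa only [fderiv_clm_apply_apply_const hA] using h

lemma fderiv_intertwining_of_eventually {A : E → F →L[ℝ] G →L[ℝ] G} {J : E → G →L[ℝ] G}
    {x : E} (hA : DifferentiableAt ℝ A x) (hJ : DifferentiableAt ℝ J x)
    (hAJ : ∀ᶠ y in 𝓝 x, ∀ p q, A y p (J y q) = J y (A y p q)) (z : E) (p : F) (q : G) :
    fderiv ℝ A x z p (J x q) + A x p (fderiv ℝ J x z q)
      = fderiv ℝ J x z (A x p q) + J x (fderiv ℝ A x z p q) := by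
  have hAp : DifferentiableAt ℝ (fun y => A y p) x := hA.clm_apply (differentiableAt_const p)
  have hev : (fun y => A y p (J y q)) =ᶠ[𝓝 x] fun y => J y (A y p q) :=
    hAJ.mono fun y hy => hy p q
  have h := congrArg (fun L : E →L[ℝ] G => L z) hev.fderiv_eq
  simp only [fderiv_clm_apply hAp (hJ.clm_apply (differentiableAt_const q)),
    fderiv_clm_apply hJ (hAp.clm_apply (differentiableAt_const q)), add_apply, coe_comp,
    Function.comp_apply, flip_apply, fderiv_clm_apply_const hJ, fderiv_clm_apply_const hA,
    fderiv_clm_apply_apply_const hA] at h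
  rw [add_comm, h, add_comm]

end Calculus

section Nijenhuis

variable {E : Type*} [NormedAddCommGroup E] [NormedSpace ℝ E]

lemma lieB_skew (X Y : E → E) : lieB Y X = -lieB X Y := by
  ext p
  simp [lieB]

lemma nijenhuis_skew (J : E → E →L[ℝ] E) (X Y : E → E) :
    nijenhuis J Y X = -nijenhuis J X Y := by
  ext p
  simp only [nijenhuis, lieB_skew Y, lieB_skew (fun q => J q (Y q)), Pi.neg_apply, map_neg]
  abel

lemma nijenhuis_const_apply {J : E → E →L[ℝ] E} {x : E} (hJ : DifferentiableAt ℝ J x)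
    (u v : E) :
    nijenhuis J (fun _ => u) (fun _ => v) x
      = fderiv ℝ J x (J x u) v - fderiv ℝ J x (J x v) u
        + J x (fderiv ℝ J x v u) - J x (fderiv ℝ J x u v) := by
  simp only [nijenhuis, lieB, fderiv_const_apply, zero_apply, fderiv_clm_apply_const hJ,
    zero_sub, sub_zero, map_neg]
  abel

lemma nijenhuis_const_antilinear_left {J : E → E →L[ℝ] E} {x : E}
    (hJ : DifferentiableAt ℝ J x) (hJ2 : ∀ z, J x (J x z) = -z)
    (hdJ : ∀ z y, fderiv ℝ J x z (J x y) = -J x (fderiv ℝ J x z y)) (u v : E) :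
    nijenhuis J (fun _ => J x u) (fun _ => v) x
      = -J x (nijenhuis J (fun _ => u) (fun _ => v) x) := by
  simp only [nijenhuis_const_apply hJ, hJ2, hdJ, map_neg, map_sub, map_add, neg_apply]
  abel

lemma nijenhuis_const_antilinear_right {J : E → E →L[ℝ] E} {x : E}
    (hJ : DifferentiableAt ℝ J x) (hJ2 : ∀ z, J x (J x z) = -z)
    (hdJ : ∀ z y, fderiv ℝ J x z (J x y) = -J x (fderiv ℝ J x z y)) (u v : E) :
    nijenhuis J (fun _ => u) (fun _ => J x v) x
      = -J x (nijenhuis J (fun _ => u) (fun _ => v) x) := by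
  rw [nijenhuis_skew, Pi.neg_apply, nijenhuis_const_antilinear_left hJ hJ2 hdJ, nijenhuis_skew,
    Pi.neg_apply, map_neg, neg_neg]

end Nijenhuis

section MinusMinusPart

variable {E : Type*} [NormedAddCommGroup E] [NormedSpace ℝ E]

noncomputable def minusMinusPart (j : E →L[ℝ] E) (S : E → E → E) (u v : E) : E :=
  (1/4 : ℝ) • (S u v + j (S (j u) v) + j (S u (j v)) - S (j u) (j v))

lemma minusMinusPart_add (j : E →L[ℝ] E) (S T : E → E → E) (u v : E) :
    minusMinusPart j (fun p q => S p q + T p q) u v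
      = minusMinusPart j S u v + minusMinusPart j T u v := by
  simp only [minusMinusPart, map_add, ← smul_add]
  congr 1
  abel

lemma minusMinusPart_eq_zero_of_linear_left {j : E →L[ℝ] E} (hj : ∀ z, j (j z) = -z)
    {S : E → E → E} (hS : ∀ u v, S (j u) v = j (S u v)) (u v : E) :
    minusMinusPart j S u v = 0 := by
  simp only [minusMinusPart, hS, hj]
  simp

lemma minusMinusPart_sub_swap_eq_zero_of_linear_right {j : E →L[ℝ] E} (hj : ∀ z, j (j z) = -z)
    {B : E → E → E} (hB : ∀ u v, B u (j v) = j (B u v)) (u v : E) :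
    minusMinusPart j (fun p q => B p q - B q p) u v = 0 := by
  simp only [minusMinusPart, hB, hj, map_sub]
  convert smul_zero (1/4 : ℝ) using 2
  abel

lemma minusMinusPart_eq_self_of_antilinear {j : E →L[ℝ] E} (hj : ∀ z, j (j z) = -z)
    {S : E → E → E} (hl : ∀ u v, S (j u) v = -j (S u v))
    (hr : ∀ u v, S u (j v) = -j (S u v)) (u v : E) :
    minusMinusPart j S u v = S u v := by
  simp only [minusMinusPart, hl, hr, map_neg, hj, neg_neg]
  module

end MinusMinusPart

section Gauge

variable {E : Type*} [NormedAddCommGroup E] [NormedSpace ℝ E]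
  {J : E → E →L[ℝ] E} {Γ A : E → E →L[ℝ] E →L[ℝ] E} {x : E}

noncomputable def covDeriv (Γ A : E → E →L[ℝ] E →L[ℝ] E) (x z p q : E) : E :=
  fderiv ℝ A x z p q + Γ x z (A x p q) - A x (Γ x z p) q - A x p (Γ x z q)

lemma curvature_add (hΓ : DifferentiableAt ℝ Γ x) (hA : DifferentiableAt ℝ A x) (u v w : E) :
    curvature (fun y => Γ y + A y) x u v w
      = curvature Γ x u v w + (covDeriv Γ A x u v w - covDeriv Γ A x v u w)
        + A x (Γ x u v - Γ x v u) w + (A x u (A x v w) - A x v (A x u w)) := by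
  have hD : fderiv ℝ (fun y => Γ y + A y) x = fderiv ℝ Γ x + fderiv ℝ A x := by
    exact fderiv_fun_add (𝕜 := ℝ) (f := Γ) (g := A) hΓ hA
  simp only [curvature, covDeriv, hD, add_apply, map_add, map_sub, sub_apply]
  abel

lemma covDeriv_symm (hA : DifferentiableAt ℝ A x)
    (hsymm : ∀ᶠ y in 𝓝 x, ∀ p q, A y p q = A y q p) (z p q : E) :
    covDeriv Γ A x z p q = covDeriv Γ A x z q p := by
  have hx : ∀ p q, A x p q = A x q p := hsymm.self_of_nhds
  rw [covDeriv, covDeriv, fderiv_apply_symm_of_eventually hA hsymm z p q, hx p q,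
    hx (Γ x z p) q, hx p (Γ x z q)]
  abel

lemma covDeriv_linear_right (hJ : DifferentiableAt ℝ J x) (hA : DifferentiableAt ℝ A x)
    (hAJ : ∀ᶠ y in 𝓝 x, ∀ p q, A y p (J y q) = J y (A y p q))
    (hac : ∀ u v, fderiv ℝ J x u v + Γ x u (J x v) - J x (Γ x u v) = 0) (z p q : E) :
    covDeriv Γ A x z p (J x q) = J x (covDeriv Γ A x z p q) := by
  have hAJx : ∀ p q, A x p (J x q) = J x (A x p q) := hAJ.self_of_nhds
  have hdJ : ∀ u v, fderiv ℝ J x u v = J x (Γ x u v) - Γ x u (J x v) := fun u v =>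
    eq_sub_of_add_eq (sub_eq_zero.mp (hac u v))
  have h := fderiv_intertwining_of_eventually hA hJ hAJ z p q
  simp only [hdJ, map_sub, hAJx] at h
  simp only [covDeriv, map_sub, map_add, hAJx]
  linear_combination (norm := module) h

lemma curvMM_add_of_minimal (hJ : DifferentiableAt ℝ J x) (hΓ : DifferentiableAt ℝ Γ x)
    (hA : DifferentiableAt ℝ A x) (hJ2 : ∀ z, J x (J x z) = -z)
    (hac : ∀ u v, fderiv ℝ J x u v + Γ x u (J x v) - J x (Γ x u v) = 0)
    (hmin : ∀ u v, Γ x u v - Γ x v u = (1/4 : ℝ) • nijenhuis J (fun _ => u) (fun _ => v) x)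
    (hsymm : ∀ᶠ y in 𝓝 x, ∀ p q, A y p q = A y q p)
    (hAJ : ∀ᶠ y in 𝓝 x, ∀ p q, A y p (J y q) = J y (A y p q)) (u v w : E) :
    curvMM J (fun y => Γ y + A y) x u v w
      = curvMM J Γ x u v w + (1/4 : ℝ) • A x (nijenhuis J (fun _ => u) (fun _ => v) x) w := by
  have hAJx : ∀ p q, A x p (J x q) = J x (A x p q) := hAJ.self_of_nhds
  have hJAx : ∀ p q, A x (J x p) q = J x (A x p q) := fun p q => by
    rw [hsymm.self_of_nhds, hAJx, hsymm.self_of_nhds]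
  -- `D_z J = J Γ_z - Γ_z J` anticommutes with `J` because `J² = -1`
  have hdJ : ∀ z y, fderiv ℝ J x z (J x y) = -J x (fderiv ℝ J x z y) := fun z y => by
    simp only [fun z y => eq_sub_of_add_eq (sub_eq_zero.mp (hac z y)), hJ2, map_sub, map_neg]
    abel
  have hB : ∀ p q, covDeriv Γ A x p (J x q) w = J x (covDeriv Γ A x p q w) := fun p q => by
    rw [covDeriv_symm hA hsymm, covDeriv_linear_right hJ hA hAJ hac, covDeriv_symm hA hsymm]
  have hN : ∀ p q, A x ((1/4 : ℝ) • nijenhuis J (fun _ => p) (fun _ => q) x) w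
      = (1/4 : ℝ) • A x (nijenhuis J (fun _ => p) (fun _ => q) x) w := fun p q => by
    rw [map_smul, smul_apply]
  change minusMinusPart (J x) (fun p q => curvature (fun y => Γ y + A y) x p q w) u v
    = minusMinusPart (J x) (fun p q => curvature Γ x p q w) u v + _
  simp only [curvature_add hΓ hA, hmin, hN]
  rw [minusMinusPart_add, minusMinusPart_add, minusMinusPart_add,
    minusMinusPart_sub_swap_eq_zero_of_linear_right hJ2 hB,
    minusMinusPart_eq_zero_of_linear_left hJ2
      (S := fun p q => A x p (A x q w) - A x q (A x p w))
      (fun p q => by simp only [hJAx, hAJx, map_sub]),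
    minusMinusPart_eq_self_of_antilinear hJ2
      (S := fun p q => (1/4 : ℝ) • A x (nijenhuis J (fun _ => p) (fun _ => q) x) w)
      (fun p q => by simp only [nijenhuis_const_antilinear_left hJ hJ2 hdJ, hJAx, map_neg,
        neg_apply, smul_neg, map_smul])
      (fun p q => by simp only [nijenhuis_const_antilinear_right hJ hJ2 hdJ, hJAx, map_neg,
        neg_apply, smul_neg, map_smul]),
    add_zero, add_zero]

end Gauge

theorem minimal_connection_gauge_curvature_general
    {E : Type*} [NormedAddCommGroup E] [NormedSpace ℝ E]
    (U : Set E) (hU : IsOpen U)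
    (J : E → E →L[ℝ] E)
    (hJs : ContDiffOn ℝ (⊤ : ℕ∞) J U)
    (hJ2 : ∀ x ∈ U, (J x).comp (J x) = -ContinuousLinearMap.id ℝ E)
    (Γ A : E → E →L[ℝ] E →L[ℝ] E)
    (hΓs : ContDiffOn ℝ (⊤ : ℕ∞) Γ U) (hAs : ContDiffOn ℝ (⊤ : ℕ∞) A U)
    (hac : ∀ x ∈ U, ∀ u v : E,
      fderiv ℝ J x u v + Γ x u (J x v) - J x (Γ x u v) = 0)
    (hmin : ∀ x ∈ U, ∀ u v : E,
      Γ x u v - Γ x v u = (1/4 : ℝ) • nijenhuis J (fun _ => u) (fun _ => v) x)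
    (hAsymm : ∀ x ∈ U, ∀ u v : E, A x u v = A x v u)
    (hAc : ∀ x ∈ U, ∀ u v : E, A x u (J x v) = J x (A x u v)) :
    (∀ x ∈ U, ∀ u v : E,
      fderiv ℝ J x u v + (Γ x + A x) u (J x v) - J x ((Γ x + A x) u v) = 0) ∧
    (∀ x ∈ U, ∀ u v : E,
      (Γ x + A x) u v - (Γ x + A x) v u
        = (1/4 : ℝ) • nijenhuis J (fun _ => u) (fun _ => v) x) ∧
    (∀ x ∈ U, ∀ u v w : E,
      curvMM J (fun y => Γ y + A y) x u v w
        = curvMM J Γ x u v w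
          + (1/4 : ℝ) • A x (nijenhuis J (fun _ => u) (fun _ => v) x) w) ∧
    (∀ x ∈ U, ∀ u v w : E,
      (Γ x + A x) (nijenhuis J (fun _ => u) (fun _ => v) x) w
          - (4 : ℝ) • curvMM J (fun y => Γ y + A y) x u v w
        = Γ x (nijenhuis J (fun _ => u) (fun _ => v) x) w
          - (4 : ℝ) • curvMM J Γ x u v w) := by
  have hdiff : ∀ {F : Type _} [NormedAddCommGroup F] [NormedSpace ℝ F] {f : E → F},
      ContDiffOn ℝ (⊤ : ℕ∞) f U → ∀ x ∈ U, DifferentiableAt ℝ f x := fun hf x hx =>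
    (hf.contDiffAt (hU.mem_nhds hx)).differentiableAt (by simp)
  have hcurv : ∀ x ∈ U, ∀ u v w : E,
      curvMM J (fun y => Γ y + A y) x u v w
        = curvMM J Γ x u v w
          + (1/4 : ℝ) • A x (nijenhuis J (fun _ => u) (fun _ => v) x) w := fun x hx =>
    curvMM_add_of_minimal (hdiff hJs x hx) (hdiff hΓs x hx) (hdiff hAs x hx)
      (fun z => by simpa using congrArg (fun L : E →L[ℝ] E => L z) (hJ2 x hx))
      (hac x hx) (hmin x hx) (eventually_of_mem (hU.mem_nhds hx) hAsymm)
      (eventually_of_mem (hU.mem_nhds hx) hAc)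
  refine ⟨fun x hx u v => ?_, fun x hx u v => ?_, hcurv, fun x hx u v w => ?_⟩
  · simp only [add_apply, map_add]
    linear_combination (norm := module) hac x hx u v + hAc x hx u v
  · simp only [add_apply]
    linear_combination (norm := module) hmin x hx u v + hAsymm x hx u v
  · rw [hcurv x hx]
    simp only [add_apply]
    module

/-- Last parts of Theorem A.1 and Propositions A.2–A.3 of the paper: gauging a minimal
connection `Γ` by a symmetric complex-bilinear `A` yields again a minimal connection,
the `(--)`-curvatures satisfy `R_{Γ+A}^{--} = R_Γ^{--} + (1/4)·A(N_J(·,·))(·)`, and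
consequently the operator `□_{u∧v}w = ∇_{N_J(u,v)}w - 4R^{--}(u,v)w` does not depend on
the choice of minimal connection. -/
theorem minimal_connection_gauge_curvature
    {E : Type*} [NormedAddCommGroup E] [NormedSpace ℝ E] [FiniteDimensional ℝ E]
    (U : Set E) (hU : IsOpen U)
    (J : E → E →L[ℝ] E)
    (hJs : ContDiffOn ℝ (⊤ : ℕ∞) J U)
    (hJ2 : ∀ x ∈ U, (J x).comp (J x) = -ContinuousLinearMap.id ℝ E)
    (Γ A : E → E →L[ℝ] E →L[ℝ] E)
    (hΓs : ContDiffOn ℝ (⊤ : ℕ∞) Γ U) (hAs : ContDiffOn ℝ (⊤ : ℕ∞) A U)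
    (hac : ∀ x ∈ U, ∀ u v : E,
      fderiv ℝ J x u v + Γ x u (J x v) - J x (Γ x u v) = 0)
    (hmin : ∀ x ∈ U, ∀ u v : E,
      Γ x u v - Γ x v u = (1/4 : ℝ) • nijenhuis J (fun _ => u) (fun _ => v) x)
    (hAsymm : ∀ x ∈ U, ∀ u v : E, A x u v = A x v u)
    (hAc : ∀ x ∈ U, ∀ u v : E, A x u (J x v) = J x (A x u v)) :
    (∀ x ∈ U, ∀ u v : E,
      fderiv ℝ J x u v + (Γ x + A x) u (J x v) - J x ((Γ x + A x) u v) = 0) ∧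
    (∀ x ∈ U, ∀ u v : E,
      (Γ x + A x) u v - (Γ x + A x) v u
        = (1/4 : ℝ) • nijenhuis J (fun _ => u) (fun _ => v) x) ∧
    (∀ x ∈ U, ∀ u v w : E,
      curvMM J (fun y => Γ y + A y) x u v w
        = curvMM J Γ x u v w
          + (1/4 : ℝ) • A x (nijenhuis J (fun _ => u) (fun _ => v) x) w) ∧
    (∀ x ∈ U, ∀ u v w : E,
      (Γ x + A x) (nijenhuis J (fun _ => u) (fun _ => v) x) w
          - (4 : ℝ) • curvMM J (fun y => Γ y + A y) x u v w
        = Γ x (nijenhuis J (fun _ => u) (fun _ => v) x) w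
          - (4 : ℝ) • curvMM J Γ x u v w) :=
  minimal_connection_gauge_curvature_general U hU J hJs hJ2 Γ A hΓs hAs hac hmin hAsymm hAc
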